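/- Sharpness: for 1 < p < ∞ and for each c < c_p (the unique positive root of (p-1)x^p − p x^{p-1} − 1 = 0), there exists f ∈ L^p(ℝ) with ‖f‖_p > 0 and ‖M f‖_p > c ‖f‖_p. One may take f = f_{ε,N}(t) = |t|^{-1/p} 1_{[ε,N]}(|t|) with ε small and N large. -/

import Mathlib

/-!
Take `f t = |t|^(-1/p)` on `1 ≤ |t| ≤ N`, so that `‖f‖_p^p = 2 log N`. Put `q = 1 - 1/p` and
`s = c_p^(-p)`. For `1 ≤ s y` and `y ≤ N` the average of `f` over `[-s y, y]` is
`((s y)^q + y^q - 2) / (q (1 + s) y)`, and the root equation for `c_p` says precisely that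
`(s^q + 1) / (q (1 + s)) = c_p`, so this average is `c_p y^(-1/p) - O(1/y)`. Hence for every
`d < c_p` there is `A`, independent of `N`, with `Mf x ≥ d |x|^(-1/p)` on `A ≤ |x| ≤ N`, giving
`‖Mf‖_p^p ≥ 2 d^p log (N / A)`; letting `N → ∞` beats `c^p · 2 log N`.
-/

open MeasureTheory Set
open scoped ENNReal

/-- The uncentered Hardy-Littlewood maximal function over intervals. -/
noncomputable def M (f : ℝ → ℝ) (x : ℝ) : ℝ≥0∞ :=
  ⨆ (a : ℝ) (b : ℝ) (_ : a ≤ x) (_ : x ≤ b) (_ : a < b),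
    ENNReal.ofReal ((b - a)⁻¹ * ∫ t in a..b, |f t|)

open Real Filter

lemma ofReal_average_le_M (f : ℝ → ℝ) {a b x : ℝ} (hax : a ≤ x) (hxb : x ≤ b) (hab : a < b) :
    ENNReal.ofReal ((b - a)⁻¹ * ∫ t in a..b, |f t|) ≤ M f x :=
  le_iSup₂_of_le a b <| le_iSup₂_of_le hax hxb <| le_iSup_of_le hab le_rfl

lemma intervalIntegral_comp_abs {g : ℝ → ℝ} {u v : ℝ} (hu : 0 ≤ u) (hv : 0 ≤ v)
    (hg : IntervalIntegrable (fun t => g |t|) volume (-u) v) :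
    ∫ t in -u..v, g |t| = (∫ t in 0..u, g t) + ∫ t in 0..v, g t := by
  have hsub : ∀ c d, c ∈ uIcc (-u) v → d ∈ uIcc (-u) v → uIcc c d ⊆ uIcc (-u) v :=
    fun c d hc hd => uIcc_subset_uIcc hc hd
  have h0 : (0 : ℝ) ∈ uIcc (-u) v := by
    rw [uIcc_of_le (by linarith)]; exact ⟨by linarith, hv⟩
  rw [← intervalIntegral.integral_add_adjacent_intervals
    (hg.mono_set (hsub _ _ left_mem_uIcc h0)) (hg.mono_set (hsub _ _ h0 right_mem_uIcc))]
  have hright : ∀ w, 0 ≤ w → ∫ t in 0..w, g |t| = ∫ t in 0..w, g t := fun w hw =>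
    intervalIntegral.integral_congr fun t ht => by
      rw [uIcc_of_le hw] at ht
      simp only [abs_of_nonneg ht.1]
  rw [← hright u hu, ← hright v hv, ← neg_zero, ← intervalIntegral.integral_comp_neg]
  simp only [abs_neg, neg_zero]

lemma lintegral_inv_abs_annulus {a b : ℝ} (ha : 0 < a) (hab : a ≤ b) :
    ∫⁻ x in abs ⁻¹' Icc a b, ENNReal.ofReal |x|⁻¹ = ENNReal.ofReal (2 * log (b / a)) := by
  have hcompact : IsCompact (abs ⁻¹' Icc a b : Set ℝ) :=
    isCompact_Icc.of_isClosed_subset (isClosed_Icc.preimage continuous_abs)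
      fun x hx => abs_le.1 hx.2
  have hint : IntegrableOn (fun x : ℝ => |x|⁻¹) (abs ⁻¹' Icc a b) :=
    (continuous_abs.continuousOn.inv₀ fun x hx => (ha.trans_le hx.1).ne').integrableOn_compact
      hcompact
  rw [← ofReal_integral_eq_lintegral_ofReal hint (ae_of_all _ fun _ => by positivity)]
  congr 1
  calc ∫ x in abs ⁻¹' Icc a b, |x|⁻¹
      = ∫ x, (Icc a b).indicator (fun r => r⁻¹) |x| := by
        rw [← integral_indicator (measurable_abs measurableSet_Icc)]
        rfl
    _ = 2 * ∫ r in Icc a b, r⁻¹ := by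
        rw [integral_comp_abs, setIntegral_indicator measurableSet_Icc,
          inter_eq_right.2 ((Icc_subset_Ioi_iff hab).2 ha)]
    _ = 2 * log (b / a) := by
        rw [integral_Icc_eq_integral_Ioc, ← intervalIntegral.integral_of_le hab,
          integral_inv_of_pos ha (ha.trans_le hab)]

variable {p N : ℝ}

lemma rpow_neg_inv_rpow (hp : p ≠ 0) {r : ℝ} (hr : 0 ≤ r) : (r ^ (-p⁻¹)) ^ p = r⁻¹ := by
  rw [← rpow_mul hr, neg_mul, inv_mul_cancel₀ hp, rpow_neg_one]

lemma ofReal_mul_log_le_lintegral_rpow {g : ℝ → ℝ≥0∞} {d A : ℝ} (hp : 0 < p) (hd : 0 ≤ d) (hA : 0 < A)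
    (hAN : A ≤ N) (hg : ∀ x, A ≤ |x| → |x| ≤ N → ENNReal.ofReal (d * |x| ^ (-p⁻¹)) ≤ g x) :
    ENNReal.ofReal (d ^ p * (2 * log (N / A))) ≤ ∫⁻ x, g x ^ p := by
  calc ENNReal.ofReal (d ^ p * (2 * log (N / A)))
      = ∫⁻ x in abs ⁻¹' Icc A N, ENNReal.ofReal (d ^ p) * ENNReal.ofReal |x|⁻¹ := by
        rw [lintegral_const_mul' _ _ ENNReal.ofReal_ne_top, lintegral_inv_abs_annulus hA hAN,
          ENNReal.ofReal_mul (by positivity)]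
    _ = ∫⁻ x in abs ⁻¹' Icc A N, ENNReal.ofReal (d * |x| ^ (-p⁻¹)) ^ p := by
        congr 1 with x
        rw [ENNReal.ofReal_rpow_of_nonneg (by positivity) hp.le,
          mul_rpow hd (rpow_nonneg (abs_nonneg x) _), rpow_neg_inv_rpow hp.ne' (abs_nonneg x),
          ENNReal.ofReal_mul (by positivity)]
    _ ≤ ∫⁻ x in abs ⁻¹' Icc A N, g x ^ p :=
        setLIntegral_mono' (measurable_abs measurableSet_Icc) fun x hx =>
          ENNReal.rpow_le_rpow (hg x hx.1 hx.2) hp.le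
    _ ≤ ∫⁻ x, g x ^ p := setLIntegral_le_lintegral _ _

lemma exists_mul_log_lt_mul_log_div {C D A : ℝ} (hCD : C < D) (hA : 0 < A) :
    ∃ N, A < N ∧ C * log N < D * log (N / A) := by
  obtain ⟨N, hAN, hN⟩ := ((eventually_gt_atTop A).and <|
    (tendsto_atTop_add_const_right _ (-(D * log A)) <|
      tendsto_log_atTop.const_mul_atTop (sub_pos.2 hCD)).eventually_gt_atTop 0).exists
  refine ⟨N, hAN, ?_⟩
  rw [log_div (hA.trans hAN).ne' hA.ne']
  linarith

lemma ENNReal.ofReal_mul_ofReal_rpow_one_div {c x : ℝ} (hp : 0 < p) (hc : 0 ≤ c) :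
    ENNReal.ofReal c * ENNReal.ofReal x ^ (1 / p) = ENNReal.ofReal (c ^ p * x) ^ (1 / p) := by
  rw [ENNReal.ofReal_mul (rpow_nonneg hc p), ENNReal.mul_rpow_of_nonneg _ _ (by positivity),
    ← ENNReal.ofReal_rpow_of_nonneg hc hp.le, ← ENNReal.rpow_mul, mul_one_div_cancel hp.ne',
    ENNReal.rpow_one]

/-- The paper's `f_{ε,N}` with `ε = 1`, as a function of `|t|`. -/
noncomputable def truncPower (p N : ℝ) : ℝ → ℝ :=
  (Icc 1 N).indicator fun r => r ^ (-p⁻¹)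

lemma truncPower_nonneg (r : ℝ) : 0 ≤ truncPower p N r :=
  indicator_nonneg (fun _ hr => rpow_nonneg (zero_le_one.trans hr.1) _) _

lemma truncPower_le_one (hp : 0 < p) (r : ℝ) : truncPower p N r ≤ 1 :=
  indicator_apply_le' (fun hr => rpow_le_one_of_one_le_of_nonpos hr.1 (by simp [hp.le]))
    fun _ => zero_le_one

lemma measurable_truncPower : Measurable (truncPower p N) :=
  (measurable_id.pow_const _).indicator measurableSet_Icc

lemma intervalIntegrable_truncPower_abs (hp : 0 < p) (a b : ℝ) :
    IntervalIntegrable (fun t => truncPower p N |t|) volume a b :=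
  (intervalIntegrable_const (c := (1 : ℝ))).mono_fun'
    (measurable_truncPower.comp measurable_abs).aestronglyMeasurable <| ae_of_all _ fun _ =>
      (norm_of_nonneg (truncPower_nonneg _)).trans_le (truncPower_le_one hp _)

lemma integral_truncPower (hp : 1 < p) {w : ℝ} (hw : 1 ≤ w) (hwN : w ≤ N) :
    ∫ r in 0..w, truncPower p N r = (w ^ (1 - p⁻¹) - 1) / (1 - p⁻¹) := by
  have hIcc : Ioc 0 w ∩ Icc 1 N = Icc 1 w := by
    ext t; simp only [mem_inter_iff, mem_Ioc, mem_Icc]; constructor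
    · rintro ⟨⟨-, h⟩, h1, -⟩; exact ⟨h1, h⟩
    · rintro ⟨h1, h⟩; exact ⟨⟨by linarith, h⟩, h1, h.trans hwN⟩
  rw [truncPower, intervalIntegral.integral_of_le (by linarith),
    setIntegral_indicator measurableSet_Icc, hIcc, integral_Icc_eq_integral_Ioc,
    ← intervalIntegral.integral_of_le hw,
    integral_rpow (Or.inl (neg_lt_neg (inv_lt_one_of_one_lt₀ hp))),
    show -p⁻¹ + 1 = 1 - p⁻¹ by ring, one_rpow]

lemma integral_abs_truncPower_abs (hp : 1 < p) {u v : ℝ} (hu : 1 ≤ u) (huN : u ≤ N)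
    (hv : 1 ≤ v) (hvN : v ≤ N) :
    ∫ t in -u..v, |truncPower p N (|t|)| = (u ^ (1 - p⁻¹) + v ^ (1 - p⁻¹) - 2) / (1 - p⁻¹) := by
  simp only [abs_of_nonneg (truncPower_nonneg _)]
  rw [intervalIntegral_comp_abs (by linarith) (by linarith)
    (intervalIntegrable_truncPower_abs (by linarith) _ _), integral_truncPower hp hu huN,
    integral_truncPower hp hv hvN]
  ring

lemma lintegral_truncPower_abs_rpow (hp : 0 < p) (hN : 1 ≤ N) :
    ∫⁻ x, ENNReal.ofReal |truncPower p N (|x|)| ^ p = ENNReal.ofReal (2 * log N) := by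
  have hpow : ∀ x, ENNReal.ofReal |truncPower p N (|x|)| ^ p
      = (abs ⁻¹' Icc 1 N).indicator (fun x => ENNReal.ofReal |x|⁻¹) x := fun x => by
    rw [abs_of_nonneg (truncPower_nonneg _),
      ENNReal.ofReal_rpow_of_nonneg (truncPower_nonneg _) hp.le, truncPower]
    by_cases hx : |x| ∈ Icc 1 N
    · rw [indicator_of_mem hx, indicator_of_mem (show x ∈ abs ⁻¹' Icc 1 N from hx),
        rpow_neg_inv_rpow hp.ne' (abs_nonneg x)]
    · rw [indicator_of_notMem hx, indicator_of_notMem (show x ∉ abs ⁻¹' Icc 1 N from hx),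
        zero_rpow hp.ne', ENNReal.ofReal_zero]
  simp_rw [hpow]
  rw [lintegral_indicator (measurable_abs measurableSet_Icc),
    lintegral_inv_abs_annulus one_pos hN, div_one]

lemma rpow_sub_one_mul_self {x : ℝ} (hx : 0 < x) (y : ℝ) : x ^ (y - 1) * x = x ^ y := by
  rw [rpow_sub_one hx.ne', div_mul_cancel₀ _ hx.ne']

section Root

variable {cp : ℝ} (hp : 1 < p) (hcp : 0 < cp)
  (hroot : (p - 1) * cp ^ p - p * cp ^ (p - 1) - 1 = 0)
include hp hcp hroot

lemma one_lt_of_root : 1 < cp := by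
  have hfac : cp ^ (p - 1) * ((p - 1) * cp - p) = 1 := by
    linear_combination (p - 1) * rpow_sub_one_mul_self hcp p + hroot
  have hpos : 0 < (p - 1) * cp - p :=
    pos_of_mul_pos_right (hfac ▸ one_pos) (rpow_pos_of_pos hcp _).le
  nlinarith

lemma root_identity : (1 - p⁻¹) * (1 + cp ^ (-p)) * cp = (cp ^ (-p)) ^ (1 - p⁻¹) + 1 := by
  have hP : 0 < cp ^ p := rpow_pos_of_pos hcp p
  rw [← rpow_mul hcp.le, show -p * (1 - p⁻¹) = 1 - p by field_simp; ring,
    rpow_sub hcp, rpow_one, rpow_neg hcp.le]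
  field_simp
  linear_combination cp * hroot + p * rpow_sub_one_mul_self hcp p

lemma mul_rpow_neg_inv_le_average {d y : ℝ} (hy : 0 < y)
    (hy_large : 2 / ((1 - p⁻¹) * (1 + cp ^ (-p))) ≤ (cp - d) * y ^ (1 - p⁻¹)) :
    d * y ^ (-p⁻¹) ≤ ((1 + cp ^ (-p)) * y)⁻¹ *
      (((cp ^ (-p) * y) ^ (1 - p⁻¹) + y ^ (1 - p⁻¹) - 2) / (1 - p⁻¹)) := by
  set q := 1 - p⁻¹
  set s := cp ^ (-p)
  have hq : 0 < q := sub_pos.2 (inv_lt_one_of_one_lt₀ hp)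
  have hs : 0 < s := rpow_pos_of_pos hcp _
  have hkey : (s * y) ^ q + y ^ q = q * (1 + s) * cp * y ^ q := by
    rw [mul_rpow hs.le hy.le, root_identity hp hcp hroot]; ring
  have hdiff : ((1 + s) * y)⁻¹ * ((q * (1 + s) * cp * y ^ q - 2) / q) - d * (y ^ q / y)
      = ((cp - d) * y ^ q * (q * (1 + s)) - 2) / (q * (1 + s) * y) := by
    field_simp; ring
  rw [div_le_iff₀ (by positivity)] at hy_large
  rw [hkey, show -p⁻¹ = q - 1 by ring, rpow_sub_one hy.ne', ← sub_nonneg, hdiff]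
  exact div_nonneg (by linarith) (by positivity)

lemma exists_ofReal_le_M_truncPower {d : ℝ} (hd : d < cp) :
    ∃ A, 1 ≤ A ∧ ∀ N x, A ≤ |x| → |x| ≤ N →
      ENNReal.ofReal (d * |x| ^ (-p⁻¹)) ≤ M (fun t => truncPower p N |t|) x := by
  set q := 1 - p⁻¹
  set s := cp ^ (-p) with hs_def
  have hs : 0 < s := rpow_pos_of_pos hcp _
  have hs1 : s ≤ 1 :=
    rpow_le_one_of_one_le_of_nonpos (one_lt_of_root hp hcp hroot).le (by linarith)
  have hsP : s * cp ^ p = 1 := by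
    rw [hs_def, rpow_neg hcp.le, inv_mul_cancel₀ (rpow_pos_of_pos hcp p).ne']
  obtain ⟨A, hA⟩ := eventually_atTop.1 <| (eventually_ge_atTop (cp ^ p)).and <|
    ((tendsto_rpow_atTop (sub_pos.2 (inv_lt_one_of_one_lt₀ hp))).const_mul_atTop
      (sub_pos.2 hd)).eventually_ge_atTop (2 / (q * (1 + s)))
  refine ⟨max A 1, le_max_right _ _, fun N x hAx hxN => ?_⟩
  set y := |x|
  obtain ⟨hPy, hy_large⟩ := hA y ((le_max_left _ _).trans hAx)
  have hy1 : 1 ≤ y := (le_max_right _ _).trans hAx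
  have hsy : 1 ≤ s * y := hsP ▸ mul_le_mul_of_nonneg_left hPy hs.le
  have hsyN : s * y ≤ N := (mul_le_of_le_one_left (by linarith) hs1).trans hxN
  obtain ⟨a, b, hax, hxb, hlen, hint⟩ : ∃ a b, a ≤ x ∧ x ≤ b ∧ b - a = (1 + s) * y ∧
      ∫ t in a..b, |truncPower p N (|t|)| = ((s * y) ^ q + y ^ q - 2) / q := by
    rcases le_total 0 x with hx | hx
    · exact ⟨-(s * y), y, by linarith, le_abs_self x, by ring,
        integral_abs_truncPower_abs hp hsy hsyN hy1 hxN⟩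
    · refine ⟨-y, s * y, neg_abs_le x, by linarith, by ring, ?_⟩
      rw [integral_abs_truncPower_abs hp hy1 hxN hsy hsyN, add_comm (y ^ q)]
  calc ENNReal.ofReal (d * y ^ (-p⁻¹))
      ≤ ENNReal.ofReal ((b - a)⁻¹ * ∫ t in a..b, |truncPower p N (|t|)|) := by
        rw [hlen, hint]
        exact ENNReal.ofReal_le_ofReal
          (mul_rpow_neg_inv_le_average hp hcp hroot (by linarith) hy_large)
    _ ≤ M (fun t => truncPower p N |t|) x :=
        ofReal_average_le_M _ hax hxb (by nlinarith)

end Root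

/-- Sharpness: for each `c < c_p` there is `f ∈ L^p(ℝ)`, `‖f‖_p > 0`, with
`‖Mf‖_p > c ‖f‖_p`. -/
theorem maximal_sharpness (p cp c : ℝ) (hp : 1 < p) (hcp : 0 < cp)
    (hroot : (p - 1) * cp ^ p - p * cp ^ (p - 1) - 1 = 0) (hc : c < cp) :
    ∃ f : ℝ → ℝ, Measurable f ∧ (∫⁻ x, ENNReal.ofReal |f x| ^ p) < ∞ ∧
      0 < (∫⁻ x, ENNReal.ofReal |f x| ^ p) ∧
      ENNReal.ofReal c * (∫⁻ x, ENNReal.ofReal |f x| ^ p) ^ (1 / p)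
        < (∫⁻ x, M f x ^ p) ^ (1 / p) := by
  have hp0 : 0 < p := by linarith
  set c' := max c 0
  have hc' : 0 ≤ c' := le_max_right c 0
  obtain ⟨d, hc'd, hdcp⟩ := exists_between (max_lt hc hcp)
  have hd : 0 ≤ d := hc'.trans hc'd.le
  obtain ⟨A, hA1, hM⟩ := exists_ofReal_le_M_truncPower hp hcp hroot hdcp
  obtain ⟨N, hAN, hN⟩ := exists_mul_log_lt_mul_log_div (rpow_lt_rpow hc' hc'd hp0) (by linarith)
  have hlogN : 0 < log N := log_pos (by linarith)
  have hnorm := lintegral_truncPower_abs_rpow (N := N) hp0 (by linarith)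
  refine ⟨fun t => truncPower p N |t|, measurable_truncPower.comp measurable_abs,
    hnorm ▸ ENNReal.ofReal_lt_top, hnorm ▸ ENNReal.ofReal_pos.2 (by linarith), ?_⟩
  calc ENNReal.ofReal c * (∫⁻ x, ENNReal.ofReal |truncPower p N (|x|)| ^ p) ^ (1 / p)
      ≤ ENNReal.ofReal c' * ENNReal.ofReal (2 * log N) ^ (1 / p) := by
        rw [hnorm]; gcongr; exact le_max_left c 0
    _ = ENNReal.ofReal (c' ^ p * (2 * log N)) ^ (1 / p) :=
        ENNReal.ofReal_mul_ofReal_rpow_one_div hp0 hc'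
    _ < ENNReal.ofReal (d ^ p * (2 * log (N / A))) ^ (1 / p) := by
        refine ENNReal.rpow_lt_rpow ((ENNReal.ofReal_lt_ofReal_iff ?_).2 ?_) (by positivity)
        · nlinarith [rpow_nonneg hc' p]
        · linarith
    _ ≤ (∫⁻ x, M (fun t => truncPower p N |t|) x ^ p) ^ (1 / p) :=
        ENNReal.rpow_le_rpow (ofReal_mul_log_le_lintegral_rpow hp0 hd (by linarith) hAN.le (hM N))
          (by positivity)
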